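/- arXiv:2303.04455 — 2 statements merged into one kernel-verified Lean document; each statement's English description precedes it below -/
import Mathlib

section
/- Generalized sector condition (vector case): Let ū ∈ ℝ^m with ū_i > 0, sat: ℝ^m → ℝ^m the decentralized saturation sat(u)_i = sign(u_i)·min(|u_i|, ū_i), and φ(u) = sat(u) − u. Let G ∈ ℝ^{m×n}, T ∈ ℝ^{m×m} diagonal positive definite, K ∈ ℝ^{m×n}, and x ∈ ℝ^n with |G_i x| ≤ ū_i for all i (where G_i is the i-th row). Then with u = Kx, φ(u)ᵀ T (sat(u) + G x) ≤ 0. -/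
open Matrix

lemma scalar_sector (u w ub : ℝ) (hub : 0 < ub) (hw : |w| ≤ ub) :
    (Real.sign u * min |u| ub - u) * (Real.sign u * min |u| ub + w) ≤ 0 := by
  have hw1 : -ub ≤ w := (abs_le.mp hw).1
  have hw2 : w ≤ ub := (abs_le.mp hw).2
  rcases lt_trichotomy u 0 with h | h | h
  · rw [Real.sign_of_neg h, abs_of_neg h]
    rcases le_or_gt (-u) ub with hle | hlt
    · rw [min_eq_left hle]; nlinarith
    · rw [min_eq_right hlt.le]; nlinarith
  · simp [h]
  · rw [Real.sign_of_pos h, abs_of_pos h]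
    rcases le_or_gt u ub with hle | hlt
    · rw [min_eq_left hle]; nlinarith
    · rw [min_eq_right hlt.le]; nlinarith

/-- Generalized sector condition (vector case, Lemma 1): with decentralized
saturation levels `ub i > 0`, `sat u i = sign (u i) * min |u i| (ub i)`,
dead-zone `φ u = sat u - u`, diagonal positive `T`, and `x` with
`|(G *ᵥ x) i| ≤ ub i` for all `i`, one has `φ(Kx)ᵀ T (sat(Kx) + Gx) ≤ 0`. -/
theorem vector_sector_condition {m n : ℕ}
    (ub : Fin m → ℝ) (hub : ∀ i, 0 < ub i)
    (T : Fin m → ℝ) (hT : ∀ i, 0 < T i)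
    (G K : Matrix (Fin m) (Fin n) ℝ) (x : Fin n → ℝ)
    (hx : ∀ i, |(G *ᵥ x) i| ≤ ub i) :
    let sat : (Fin m → ℝ) → (Fin m → ℝ) :=
      fun u i => Real.sign (u i) * min |u i| (ub i)
    let φ : (Fin m → ℝ) → (Fin m → ℝ) := fun u i => sat u i - u i
    ∑ i, φ (K *ᵥ x) i * T i * (sat (K *ᵥ x) i + (G *ᵥ x) i) ≤ 0 := by
  intro sat φ
  apply Finset.sum_nonpos
  intro i _
  have h := scalar_sector ((K *ᵥ x) i) ((G *ᵥ x) i) (ub i) (hub i) (hx i)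
  have : φ (K *ᵥ x) i * T i * (sat (K *ᵥ x) i + (G *ᵥ x) i)
      = T i * ((Real.sign ((K *ᵥ x) i) * min |(K *ᵥ x) i| (ub i) - (K *ᵥ x) i) *
        (Real.sign ((K *ᵥ x) i) * min |(K *ᵥ x) i| (ub i) + (G *ᵥ x) i)) := by
    simp [φ, sat]; ring
  rw [this]
  exact mul_nonpos_of_nonneg_of_nonpos (hT i).le h
end

section
/- Direction (ii)⇒(i) of Lemma 2 (matrix-constrained relaxation): Let M₁ ∈ S^{n₁}, M₂ ∈ ℝ^{n₁×n₂}, M₃ ∈ S^{n₃}, N₁ ∈ S^{n₃}, N₂ ∈ ℝ^{n₃×n₂}, N₃ ∈ S^{n₂} with N₃ ≻ 0. Suppose there exists η > 0 such that the block matrix [[M₁, 0, M₂],[0, M₃ + ηN₁, ηN₂],[M₂ᵀ, ηN₂ᵀ, ηN₃]] is positive definite. Then for every A ∈ ℝ^{n₂×n₃} satisfying [I; A]ᵀ [[N₁, N₂],[N₂ᵀ, N₃]] [I; A] ⪯ 0, the matrix [[M₁, M₂A],[AᵀM₂ᵀ, M₃]] is positive definite. -/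
/-!
With `C = [[I, 0], [0, I], [0, A]]` the congruence `Cᵀ · big · C` is
`[[M₁, M₂ A], [Aᵀ M₂ᵀ, M₃ + η Q]]`, where `Q = [I; A]ᵀ N [I; A] ⪯ 0`. Since `C` is injective the
congruence is positive definite, and the target matrix differs from it by the positive
semidefinite block `diag(0, -η Q)`.
-/

open Matrix

namespace Matrix

variable {R l m n : Type*} [Fintype l] [Fintype m] [Fintype n]

section CommRing

variable [CommRing R] [DecidableEq m]

theorem fromRows_one_transpose_mul_fromBlocks_mul_fromRows_one (A : Matrix n m R)
    (P : Matrix m m R) (Q : Matrix m n R) (S : Matrix n m R) (T : Matrix n n R) :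
    (fromRows (1 : Matrix m m R) A)ᵀ * fromBlocks P Q S T * fromRows (1 : Matrix m m R) A =
      P + Q * A + Aᵀ * S + Aᵀ * T * A := by
  simp only [transpose_fromRows, transpose_one, fromCols_mul_fromBlocks, fromCols_mul_fromRows,
    Matrix.one_mul, Matrix.mul_one, Matrix.add_mul, Matrix.mul_assoc]
  abel

variable [DecidableEq l]

theorem fromBlocks_one_fromRows_one_transpose_mul_fromBlocks_mul (A : Matrix n m R)
    (M : Matrix l l R) (B : Matrix l n R) (C : Matrix n l R) (D : Matrix (m ⊕ n) (m ⊕ n) R) :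
    (fromBlocks (1 : Matrix l l R) 0 0 (fromRows (1 : Matrix m m R) A))ᵀ *
        fromBlocks M (fromCols 0 B) (fromRows 0 C) D *
        fromBlocks (1 : Matrix l l R) 0 0 (fromRows (1 : Matrix m m R) A) =
      fromBlocks M (B * A) (Aᵀ * C)
        ((fromRows (1 : Matrix m m R) A)ᵀ * D * fromRows (1 : Matrix m m R) A) := by
  simp [fromBlocks_transpose, fromBlocks_multiply, transpose_fromRows, fromCols_mul_fromRows]

theorem mulVec_injective_fromBlocks_one_fromRows_one (A : Matrix n m R) :
    Function.Injective
      (fromBlocks (1 : Matrix l l R) 0 0 (fromRows (1 : Matrix m m R) A)).mulVec := by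
  set L := fromBlocks (1 : Matrix l l R) 0 0 (fromCols (1 : Matrix m m R) (0 : Matrix m n R))
  have hL : L * fromBlocks (1 : Matrix l l R) 0 0 (fromRows (1 : Matrix m m R) A) = 1 := by
    simp [L, fromBlocks_multiply, fromCols_mul_fromRows]
  refine Function.LeftInverse.injective (g := L.mulVec) fun x => ?_
  rw [mulVec_mulVec, hL, one_mulVec]

end CommRing

theorem PosSemidef.fromBlocks_zero_zero_zero [CommRing R] [PartialOrder R] [StarRing R] [DecidableEq n]
    {X : Matrix n n R} (hX : X.PosSemidef) : (fromBlocks (0 : Matrix m m R) 0 0 X).PosSemidef := by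
  have := hX.conjTranspose_mul_mul_same (fromCols (0 : Matrix n m R) (1 : Matrix n n R))
  simp only [conjTranspose_fromCols_eq_fromRows_conjTranspose, fromRows_mul, mul_fromCols,
    fromCols_fromRows_eq_fromBlocks] at this
  simpa using this

end Matrix

theorem lemma2_ii_implies_i_general {n₁ n₂ n₃ : ℕ}
    (M₁ : Matrix (Fin n₁) (Fin n₁) ℝ)
    (M₂ : Matrix (Fin n₁) (Fin n₂) ℝ)
    (M₃ : Matrix (Fin n₃) (Fin n₃) ℝ)
    (N₁ : Matrix (Fin n₃) (Fin n₃) ℝ)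
    (N₂ : Matrix (Fin n₃) (Fin n₂) ℝ)
    (N₃ : Matrix (Fin n₂) (Fin n₂) ℝ)
    (η : ℝ) (hη : 0 < η)
    (hbig : (Matrix.fromBlocks M₁
        (Matrix.fromCols (0 : Matrix (Fin n₁) (Fin n₃) ℝ) M₂)
        (Matrix.fromRows (0 : Matrix (Fin n₃) (Fin n₁) ℝ) M₂.transpose)
        (Matrix.fromBlocks (M₃ + η • N₁) (η • N₂)
          (η • N₂.transpose) (η • N₃))).PosDef) :
    ∀ A : Matrix (Fin n₂) (Fin n₃) ℝ,
      (-( (Matrix.fromRows (1 : Matrix (Fin n₃) (Fin n₃) ℝ) A).transpose *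
          (Matrix.fromBlocks N₁ N₂ N₂.transpose N₃) *
          Matrix.fromRows (1 : Matrix (Fin n₃) (Fin n₃) ℝ) A)).PosSemidef →
      (Matrix.fromBlocks M₁ (M₂ * A) (A.transpose * M₂.transpose) M₃).PosDef := by
  intro A hA
  set F := fromRows (1 : Matrix (Fin n₃) (Fin n₃) ℝ) A
  set Q := Fᵀ * fromBlocks N₁ N₂ N₂ᵀ N₃ * F
  have hQ : Fᵀ * fromBlocks (M₃ + η • N₁) (η • N₂) (η • N₂ᵀ) (η • N₃) * F = M₃ + η • Q := by
    simp only [F, Q, fromRows_one_transpose_mul_fromBlocks_mul_fromRows_one, Matrix.mul_smul,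
      Matrix.smul_mul, smul_add]
    abel
  have hcongr := hbig.conjTranspose_mul_mul_same
    (mulVec_injective_fromBlocks_one_fromRows_one (l := Fin n₁) A)
  rw [conjTranspose_eq_transpose_of_trivial,
    fromBlocks_one_fromRows_one_transpose_mul_fromBlocks_mul, hQ] at hcongr
  have hsplit : fromBlocks M₁ (M₂ * A) (Aᵀ * M₂ᵀ) M₃ =
      fromBlocks M₁ (M₂ * A) (Aᵀ * M₂ᵀ) (M₃ + η • Q) + fromBlocks 0 0 0 (η • -Q) := by
    simp [fromBlocks_add]
  rw [hsplit]
  exact hcongr.add_posSemidef (hA.smul hη.le).fromBlocks_zero_zero_zero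

/-- Direction (ii)⇒(i) of Lemma 2 (matrix-constrained relaxation). -/
theorem lemma2_ii_implies_i {n₁ n₂ n₃ : ℕ}
    (M₁ : Matrix (Fin n₁) (Fin n₁) ℝ) (hM₁ : M₁.IsSymm)
    (M₂ : Matrix (Fin n₁) (Fin n₂) ℝ)
    (M₃ : Matrix (Fin n₃) (Fin n₃) ℝ) (hM₃ : M₃.IsSymm)
    (N₁ : Matrix (Fin n₃) (Fin n₃) ℝ) (hN₁ : N₁.IsSymm)
    (N₂ : Matrix (Fin n₃) (Fin n₂) ℝ)
    (N₃ : Matrix (Fin n₂) (Fin n₂) ℝ) (hN₃ : N₃.PosDef)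
    (η : ℝ) (hη : 0 < η)
    (hbig : (Matrix.fromBlocks M₁
        (Matrix.fromCols (0 : Matrix (Fin n₁) (Fin n₃) ℝ) M₂)
        (Matrix.fromRows (0 : Matrix (Fin n₃) (Fin n₁) ℝ) M₂.transpose)
        (Matrix.fromBlocks (M₃ + η • N₁) (η • N₂)
          (η • N₂.transpose) (η • N₃))).PosDef) :
    ∀ A : Matrix (Fin n₂) (Fin n₃) ℝ,
      (-( (Matrix.fromRows (1 : Matrix (Fin n₃) (Fin n₃) ℝ) A).transpose *
          (Matrix.fromBlocks N₁ N₂ N₂.transpose N₃) *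
          Matrix.fromRows (1 : Matrix (Fin n₃) (Fin n₃) ℝ) A)).PosSemidef →
      (Matrix.fromBlocks M₁ (M₂ * A) (A.transpose * M₂.transpose) M₃).PosDef :=
  lemma2_ii_implies_i_general M₁ M₂ M₃ N₁ N₂ N₃ η hη hbig
end
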